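/- arXiv:2002.09368 — 3 statements merged into one kernel-verified Lean document; each statement's English description precedes it below -/
import Mathlib

section
/- In dimension n = 1 let A⁺ = {0, 2}, A⁻ = {1}, and consider the coefficient vector v with v_0 = 1, v_1 = −2, v_2 = 1, whose exponential sum is f(x) = 1 − 2·eˣ + e^{2x}. Then f(x) ≥ 0 for all x ∈ ℝ (indeed f(x) = (eˣ − 1)²), and in particular v ∈ C_{(A⁺,A⁻)}; however, v ∉ D_{(A⁺,A⁻)}: for λ ∈ Λ(A⁺,1) given by λ_0 = λ_2 = 1/2 one has |v_1| = 2 > 1 = v_0^{1/2}·v_2^{1/2}. Consequently the inclusion of D_{(A⁺,A⁻)} in the set of coefficient vectors of nonnegative exponential sums is strict. -/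
open Finset

/-- The exponential sum with support `A ⊆ ℝ` (dimension `n = 1`) and coefficients `v`. -/
noncomputable def expSum1 (A : Finset ℝ) (v : ℝ → ℝ) (x : ℝ) : ℝ :=
  ∑ γ ∈ A, v γ * Real.exp (x * γ)

/-- The signed SONC (= SAGE) cone `C_{(A⁺,A⁻)}` in dimension one. -/
def InSAGE1 (Ap An : Finset ℝ) (c : ℝ → ℝ) : Prop :=
  (∀ α ∈ Ap, 0 ≤ c α) ∧ (∀ β ∈ An, c β ≤ 0) ∧
  ∃ (m : ℕ) (d : Fin m → ℝ → ℝ),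
    (∀ γ ∈ Ap ∪ An, c γ = ∑ i, d i γ) ∧
    (∀ i, ∀ γ₁ ∈ Ap ∪ An, ∀ γ₂ ∈ Ap ∪ An, d i γ₁ < 0 → d i γ₂ < 0 → γ₁ = γ₂) ∧
    (∀ i, ∀ x : ℝ, 0 ≤ expSum1 (Ap ∪ An) (d i) x)

/-- `Λ(A⁺, β)` in dimension one. -/
def IsBary1 (Ap : Finset ℝ) (β : ℝ) (lam : ℝ → ℝ) : Prop :=
  (∀ α ∈ Ap, 0 ≤ lam α) ∧ (∑ α ∈ Ap, lam α = 1) ∧ (∑ α ∈ Ap, lam α * α = β)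

/-- The set `D_{(A⁺,A⁻)}` cut out by the weighted geometric-mean inequalities. -/
def InDual1 (Ap An : Finset ℝ) (v : ℝ → ℝ) : Prop :=
  (∀ α ∈ Ap, 0 ≤ v α) ∧
  ∀ β ∈ An, ∀ lam : ℝ → ℝ, IsBary1 Ap β lam → |v β| ≤ ∏ α ∈ Ap, v α ^ lam α

/-! In `s = eˣ` the exponential sum is the quadratic `v₀ + v₁ s + v₂ s²`, which is nonnegative as
soon as `|v₁| ≤ 2 √v₀ √v₂`. The barycentric weights `(1/2, 1/2)` of `1` in `{0, 2}` make membership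
in `D` give only `|v₁| ≤ √v₀ √v₂`; the factor `2` lost there is why `(1, -2, 1)`, whose
exponential sum is `(eˣ - 1)²`, lies outside `D`. -/

lemma quadratic_nonneg_of_abs_le_two_mul_sqrt_mul_sqrt {a b c : ℝ} (ha : 0 ≤ a) (hc : 0 ≤ c)
    (hb : |b| ≤ 2 * √a * √c) (s : ℝ) : 0 ≤ a + b * s + c * s ^ 2 := by
  have hbs : |b * s| ≤ 2 * √a * √c * |s| := by
    rw [abs_mul]; exact mul_le_mul_of_nonneg_right hb (abs_nonneg s)
  calc 0 ≤ (√a - √c * |s|) ^ 2 := sq_nonneg _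
    _ = a - 2 * (√a * √c * |s|) + c * s ^ 2 := by
      rw [sub_sq, mul_pow, Real.sq_sqrt ha, Real.sq_sqrt hc, sq_abs]; ring
    _ ≤ a + b * s + c * s ^ 2 := by linarith [neg_abs_le (b * s)]

lemma expSum1_zero_one_two (w : ℝ → ℝ) (x : ℝ) :
    expSum1 {0, 1, 2} w x = w 0 + w 1 * Real.exp x + w 2 * Real.exp x ^ 2 := by
  rw [expSum1, sum_insert (by norm_num), sum_insert (by norm_num), sum_singleton,
    mul_zero, Real.exp_zero, mul_one, mul_one, show x * 2 = x + x by ring, Real.exp_add]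
  ring

lemma inSAGE1_singleton_of_nonneg {Ap : Finset ℝ} {β : ℝ} {c : ℝ → ℝ}
    (hAp : ∀ α ∈ Ap, 0 ≤ c α) (hβ : c β ≤ 0) (hc : ∀ x, 0 ≤ expSum1 (Ap ∪ {β}) c x) :
    InSAGE1 Ap {β} c := by
  have only_β_neg : ∀ γ ∈ Ap ∪ {β}, c γ < 0 → γ = β := fun γ hγ hneg => by
    rcases mem_union.mp hγ with hα | hγβ
    · exact absurd (hAp γ hα) (not_le.mpr hneg)
    · exact mem_singleton.mp hγβ
  refine ⟨hAp, by simpa using hβ, 1, fun _ => c, fun γ _ => by simp, ?_, fun _ => hc⟩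
  intro _ γ₁ h₁ γ₂ h₂ hn₁ hn₂
  rw [only_β_neg γ₁ h₁ hn₁, only_β_neg γ₂ h₂ hn₂]

lemma isBary1_half_half :
    IsBary1 {0, 2} 1 (fun t => if t = 0 then 1 / 2 else if t = 2 then 1 / 2 else 0) := by
  refine ⟨fun α hα => ?_, by norm_num, by norm_num⟩
  rcases mem_insert.mp hα with rfl | hα
  · norm_num
  · rw [mem_singleton.mp hα]; norm_num

lemma abs_le_sqrt_mul_sqrt_of_inDual1 {w : ℝ → ℝ} (hw : InDual1 {0, 2} {1} w) :
    |w 1| ≤ √(w 0) * √(w 2) := by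
  have h := hw.2 1 (mem_singleton_self 1) _ isBary1_half_half
  rw [prod_insert (by norm_num), prod_singleton] at h
  norm_num [Real.sqrt_eq_rpow] at h ⊢
  exact h

lemma expSum1_nonneg_of_inDual1 {w : ℝ → ℝ} (hw : InDual1 {0, 2} {1} w) (x : ℝ) :
    0 ≤ expSum1 {0, 1, 2} w x := by
  rw [expSum1_zero_one_two]
  have hsqrt : 0 ≤ √(w 0) * √(w 2) := by positivity
  exact quadratic_nonneg_of_abs_le_two_mul_sqrt_mul_sqrt (hw.1 0 (by simp)) (hw.1 2 (by simp))
    ((abs_le_sqrt_mul_sqrt_of_inDual1 hw).trans (by linarith)) _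

/-- For `f(x) = 1 − 2eˣ + e^{2x} = (eˣ−1)²` with `A⁺ = {0,2}`, `A⁻ = {1}`,
the coefficient vector lies in the primal signed SONC cone but not in `D_{(A⁺,A⁻)}`;
hence the inclusion of `D_{(A⁺,A⁻)}` in the nonnegativity cone is strict. -/
theorem dual_strictly_smaller_than_nonneg :
    let v : ℝ → ℝ := fun t => if t = 1 then -2 else if t = 0 then 1 else if t = 2 then 1 else 0
    (∀ x : ℝ, expSum1 {0, 1, 2} v x = (Real.exp x - 1) ^ 2) ∧
    (∀ x : ℝ, 0 ≤ expSum1 {0, 1, 2} v x) ∧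
    InSAGE1 {0, 2} {1} v ∧
    ¬ InDual1 {0, 2} {1} v ∧
    {w : ℝ → ℝ | InDual1 {0, 2} {1} w}
      ⊂ {w : ℝ → ℝ | ∀ x : ℝ, 0 ≤ expSum1 {0, 1, 2} w x} := by
  intro v
  obtain ⟨hv0, hv1, hv2⟩ : v 0 = 1 ∧ v 1 = -2 ∧ v 2 = 1 := by norm_num [v]
  have heq : ∀ x, expSum1 {0, 1, 2} v x = (Real.exp x - 1) ^ 2 := fun x => by
    rw [expSum1_zero_one_two, hv0, hv1, hv2]; ring
  have hnn : ∀ x, 0 ≤ expSum1 {0, 1, 2} v x := fun x => heq x ▸ sq_nonneg _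
  have hnotdual : ¬ InDual1 {0, 2} {1} v := fun hdual => by
    have h := abs_le_sqrt_mul_sqrt_of_inDual1 hdual
    rw [hv0, hv1, hv2] at h
    norm_num at h
  have hsage : InSAGE1 {0, 2} {1} v := by
    refine inSAGE1_singleton_of_nonneg (fun α hα => ?_) (by rw [hv1]; norm_num) ?_
    · rcases mem_insert.mp hα with rfl | hα
      · rw [hv0]; norm_num
      · rw [mem_singleton.mp hα, hv2]; norm_num
    · rwa [insert_union, singleton_union, pair_comm]
  refine ⟨heq, hnn, hsage, hnotdual, ?_⟩
  exact Set.ssubset_def.mpr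
    ⟨fun w hw => expSum1_nonneg_of_inDual1 hw, fun hsup => hnotdual (hsup hnn)⟩
end

section
/- Let A⁺, A⁻ ⊆ ℝⁿ be disjoint finite sets with A⁺ ≠ ∅, set A = A⁺ ∪ A⁻, and let v : A → ℝ satisfy v_α > 0 for all α ∈ A⁺. Then v ∈ D_{(A⁺,A⁻)} if and only if the following finite system of linear inequalities in the unknowns (τ^{(β)})_{β∈A⁻} ⊆ ℝⁿ is feasible: for every β ∈ A⁻ and every α ∈ A⁺, ln(|v_β|/v_α) ≤ ⟨α − β, τ^{(β)}⟩. Moreover, every such v belongs to the dual cone of C_{(A⁺,A⁻)}. -/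
open Finset

/-- The exponential sum with support `A` and coefficient vector `v`. -/
noncomputable def expSum {n : ℕ} (A : Finset (Fin n → ℝ)) (v : (Fin n → ℝ) → ℝ)
    (x : Fin n → ℝ) : ℝ :=
  ∑ γ ∈ A, v γ * Real.exp (∑ i, x i * γ i)

/-- The signed SONC (= SAGE) cone `C_{(A⁺,A⁻)}`. -/
def InSAGE {n : ℕ} (Ap An : Finset (Fin n → ℝ)) (c : (Fin n → ℝ) → ℝ) : Prop :=
  (∀ α ∈ Ap, 0 ≤ c α) ∧ (∀ β ∈ An, c β ≤ 0) ∧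
  ∃ (m : ℕ) (d : Fin m → (Fin n → ℝ) → ℝ),
    (∀ γ ∈ Ap ∪ An, c γ = ∑ i, d i γ) ∧
    (∀ i, ∀ γ₁ ∈ Ap ∪ An, ∀ γ₂ ∈ Ap ∪ An, d i γ₁ < 0 → d i γ₂ < 0 → γ₁ = γ₂) ∧
    (∀ i, ∀ x : Fin n → ℝ, 0 ≤ expSum (Ap ∪ An) (d i) x)

/-- The dual cone of a set `K` of coefficient vectors on the support `A`. -/
def dualCone {n : ℕ} (A : Finset (Fin n → ℝ)) (K : Set ((Fin n → ℝ) → ℝ)) :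
    Set ((Fin n → ℝ) → ℝ) :=
  {v | ∀ c ∈ K, 0 ≤ ∑ γ ∈ A, v γ * c γ}

/-- `Λ(A⁺, β)`: barycentric coordinates of `β` with respect to `A⁺`. -/
def IsBary {n : ℕ} (Ap : Finset (Fin n → ℝ)) (β : Fin n → ℝ) (lam : (Fin n → ℝ) → ℝ) : Prop :=
  (∀ α ∈ Ap, 0 ≤ lam α) ∧ (∑ α ∈ Ap, lam α = 1) ∧ (∑ α ∈ Ap, lam α • α = β)

/-- The set `D_{(A⁺,A⁻)}` cut out by the weighted geometric-mean inequalities. -/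
def InDual {n : ℕ} (Ap An : Finset (Fin n → ℝ)) (v : (Fin n → ℝ) → ℝ) : Prop :=
  (∀ α ∈ Ap, 0 ≤ v α) ∧
  ∀ β ∈ An, ∀ lam : (Fin n → ℝ) → ℝ, IsBary Ap β lam → |v β| ≤ ∏ α ∈ Ap, v α ^ lam α

open Real

/-! Fix `β ∈ A⁻` with `v_β ≠ 0` and put `b_α = log |v_β| - log v_α`. Taking logarithms, the
inequalities defining `D` at `β` say that `∑ λ_α b_α ≤ 0` whenever `λ ≥ 0`, `∑ λ_α = 1` and
`∑ λ_α (α - β) = 0`; by Farkas' lemma this is exactly solvability of `b_α ≤ ⟨α - β, τ⟩`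
for `α ∈ A⁺`.

A solution `τ` yields the upper envelope `u(γ) = max_β |v_β| e^{⟨τ_β, β - γ⟩}`, which lies below `v`
on `A⁺` and above `|v|` on `A⁻`. Since `c ∈ C` is nonnegative on `A⁺` and nonpositive on `A⁻`,
`⟨v, c⟩ ≥ ⟨u, c⟩`; and `⟨u, c⁽ⁱ⁾⟩ ≥ 0` for each summand `c⁽ⁱ⁾`, because at its only negative entry
`u` is attained by one exponential minorant `γ ↦ s e^{⟨x, γ⟩}`, against which `c⁽ⁱ⁾` pairs to
`s f_{c⁽ⁱ⁾}(x) ≥ 0`. -/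

section Farkas

variable {𝕜 E ι : Type*} [Field 𝕜] [LinearOrder 𝕜] [IsStrictOrderedRing 𝕜]
  [AddCommGroup E] [Module 𝕜 E]

theorem farkas_alternative [DecidableEq ι] (s : Finset ι) (u : ι → E) (w : E) :
    (∃ c : ι → 𝕜, (∀ i ∈ s, 0 ≤ c i) ∧ ∑ i ∈ s, c i • u i = w) ∨
      ∃ f : Module.Dual 𝕜 E, (∀ i ∈ s, 0 ≤ f (u i)) ∧ f w < 0 := by
  induction s using Finset.induction_on generalizing u w with
  | empty =>
    by_cases hw : w = 0
    · exact Or.inl ⟨0, by simp, by simp [hw]⟩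
    · obtain ⟨f, hf⟩ := Module.Projective.exists_dual_eq_one 𝕜 hw
      exact Or.inr ⟨-f, by simp, by simp [hf]⟩
  | insert a s ha ih =>
    have sum_update (c : ι → 𝕜) (μ : 𝕜) :
        ∑ i ∈ insert a s, Function.update c a μ i • u i = μ • u a + ∑ i ∈ s, c i • u i := by
      rw [sum_insert ha, Function.update_self]
      congr 1
      exact sum_congr rfl fun i hi => by rw [Function.update_of_ne (ne_of_mem_of_not_mem hi ha)]
    have update_nonneg {c : ι → 𝕜} {μ : 𝕜} (hc : ∀ i ∈ s, 0 ≤ c i) (hμ : 0 ≤ μ) :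
        ∀ i ∈ insert a s, 0 ≤ Function.update c a μ i := by
      intro i hi
      rcases eq_or_ne i a with rfl | hia
      · simpa
      · simpa [hia] using hc i ((mem_insert.1 hi).resolve_left hia)
    rcases ih u w with ⟨c, hc, hcw⟩ | ⟨f, hf, hfw⟩
    · exact Or.inl ⟨Function.update c a 0, update_nonneg hc le_rfl, by simp [sum_update, hcw]⟩
    by_cases hfa : 0 ≤ f (u a)
    · exact Or.inr ⟨f, forall_mem_insert _ _ _ |>.2 ⟨hfa, hf⟩, hfw⟩
    rw [not_le] at hfa
    -- `P` projects along `u a` onto `ker f`.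
    set P : E →ₗ[𝕜] E := LinearMap.id - (f (u a))⁻¹ • f.smulRight (u a) with hP
    have hP_apply (z : E) : P z = z - (f z / f (u a)) • u a := by
      simp [hP, div_eq_inv_mul, smul_smul]
    have hPa : P (u a) = 0 := by rw [hP_apply, div_self hfa.ne, one_smul, sub_self]
    rcases ih (P ∘ u) (P w) with ⟨c, hc, hcw⟩ | ⟨g, hg, hgw⟩
    · set μ := f (w - ∑ i ∈ s, c i • u i) / f (u a)
      have hμ : 0 ≤ μ := by
        refine div_nonneg_of_nonpos ?_ hfa.le
        have : 0 ≤ f (∑ i ∈ s, c i • u i) := by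
          simpa [map_sum] using sum_nonneg fun i hi => mul_nonneg (hc i hi) (hf i hi)
        rw [map_sub]
        linarith
      have hker : P (w - ∑ i ∈ s, c i • u i) = 0 := by
        simp only [map_sub, map_sum, map_smul, ← hcw, Function.comp_apply, sub_self]
      rw [hP_apply, sub_eq_zero] at hker
      refine Or.inl ⟨Function.update c a μ, update_nonneg hc hμ, ?_⟩
      rw [sum_update, ← hker, sub_add_cancel]
    · refine Or.inr ⟨g ∘ₗ P, forall_mem_insert _ _ _ |>.2 ⟨by simp [hPa], hg⟩, hgw⟩

theorem exists_dual_le_of_forall_sum_mul_nonpos [DecidableEq ι] (s : Finset ι) (a : ι → E)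
    (b : ι → 𝕜) (h : ∀ lam : ι → 𝕜, (∀ i ∈ s, 0 ≤ lam i) → ∑ i ∈ s, lam i = 1 →
      ∑ i ∈ s, lam i • a i = 0 → ∑ i ∈ s, lam i * b i ≤ 0) :
    ∃ φ : Module.Dual 𝕜 E, ∀ i ∈ s, b i ≤ φ (a i) := by
  rcases farkas_alternative (𝕜 := 𝕜) s (fun i => (a i, -b i)) ((0 : E), (-1 : 𝕜)) with
    ⟨c, hc, hcw⟩ | ⟨y, hy, hy0⟩
  · exfalso
    have hca : ∑ i ∈ s, c i • a i = 0 := by simpa [Prod.fst_sum] using congrArg Prod.fst hcw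
    have hcb : ∑ i ∈ s, c i * b i = 1 := by simpa [Prod.snd_sum] using congrArg Prod.snd hcw
    have hσ : 0 < ∑ i ∈ s, c i := by
      refine (sum_nonneg hc).lt_of_ne fun hσ => ?_
      have hc0 := (sum_eq_zero_iff_of_nonneg hc).1 hσ.symm
      rw [sum_eq_zero fun i hi => by rw [hc0 i hi, zero_mul]] at hcb
      exact zero_ne_one hcb
    have hle := h (fun i => (∑ j ∈ s, c j)⁻¹ * c i) (fun i hi => by have := hc i hi; positivity)
      (by rw [← mul_sum, inv_mul_cancel₀ hσ.ne']) (by simp [mul_smul, ← smul_sum, hca])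
    simp only [mul_assoc, ← mul_sum, hcb, mul_one] at hle
    exact (inv_pos.2 hσ).not_ge hle
  · have hy_apply (x : E) (t : 𝕜) : y (x, t) = y (x, 0) + t * y (0, 1) := by
      rw [← smul_eq_mul, ← map_smul, ← map_add]
      simp
    have hr : 0 < y (0, 1) := by
      rw [hy_apply, Prod.mk_zero_zero, map_zero, zero_add] at hy0
      linarith
    refine ⟨(y (0, 1))⁻¹ • y ∘ₗ LinearMap.inl 𝕜 E 𝕜, fun i hi => ?_⟩
    have hyi := hy i hi
    rw [hy_apply] at hyi
    simp only [LinearMap.smul_apply, LinearMap.comp_apply, LinearMap.inl_apply, smul_eq_mul]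
    rw [← div_eq_inv_mul, le_div_iff₀ hr]
    linarith

end Farkas

theorem sum_smul_sub_eq_zero_iff {R E ι : Type*} [Ring R] [AddCommGroup E] [Module R E]
    {s : Finset ι} {lam : ι → R} (hlam : ∑ i ∈ s, lam i = 1) (a : ι → E) (β : E) :
    ∑ i ∈ s, lam i • (a i - β) = 0 ↔ ∑ i ∈ s, lam i • a i = β := by
  simp [smul_sub, sum_sub_distrib, ← sum_smul, hlam, sub_eq_zero]

section Signomial

variable {n : ℕ}

theorem IsBary.sum_smul_sub_eq_zero {Ap : Finset (Fin n → ℝ)} {β : Fin n → ℝ}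
    {lam : (Fin n → ℝ) → ℝ} (hlam : IsBary Ap β lam) : ∑ α ∈ Ap, lam α • (α - β) = 0 :=
  (sum_smul_sub_eq_zero_iff hlam.2.1 id β).2 hlam.2.2

theorem IsBary.sum_mul_dotProduct_eq_zero {Ap : Finset (Fin n → ℝ)} {β : Fin n → ℝ}
    {lam : (Fin n → ℝ) → ℝ} (hlam : IsBary Ap β lam) (t : Fin n → ℝ) :
    ∑ α ∈ Ap, lam α * ((α - β) ⬝ᵥ t) = 0 := by
  simp only [← smul_eq_mul, ← smul_dotProduct, ← sum_dotProduct, hlam.sum_smul_sub_eq_zero,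
    zero_dotProduct]

theorem IsBary.le_prod_rpow {Ap : Finset (Fin n → ℝ)} {β : Fin n → ℝ} {lam : (Fin n → ℝ) → ℝ}
    (hlam : IsBary Ap β lam) {v : (Fin n → ℝ) → ℝ} (hv : ∀ α ∈ Ap, 0 ≤ v α) {b : ℝ} (hb : 0 ≤ b)
    {t : Fin n → ℝ} (ht : ∀ α ∈ Ap, b ≤ v α * exp ((α - β) ⬝ᵥ t)) :
    b ≤ ∏ α ∈ Ap, v α ^ lam α :=
  calc b = ∏ α ∈ Ap, b ^ lam α := by rw [← rpow_sum_of_nonneg hb hlam.1, hlam.2.1, rpow_one]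
    _ ≤ ∏ α ∈ Ap, (v α * exp ((α - β) ⬝ᵥ t)) ^ lam α :=
      prod_le_prod (fun _ _ => rpow_nonneg hb _)
        fun α hα => rpow_le_rpow hb (ht α hα) (hlam.1 α hα)
    _ = (∏ α ∈ Ap, v α ^ lam α) * exp (∑ α ∈ Ap, lam α * ((α - β) ⬝ᵥ t)) := by
      rw [exp_sum, ← prod_mul_distrib]
      refine prod_congr rfl fun α hα => ?_
      rw [mul_rpow (hv α hα) (exp_pos _).le, ← exp_mul, mul_comm (lam α)]
    _ = ∏ α ∈ Ap, v α ^ lam α := by rw [hlam.sum_mul_dotProduct_eq_zero, exp_zero, mul_one]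

theorem exists_le_mul_exp_of_forall_isBary {Ap : Finset (Fin n → ℝ)} {v : (Fin n → ℝ) → ℝ}
    (hv : ∀ α ∈ Ap, 0 < v α) {β : Fin n → ℝ} {b : ℝ} (hb : 0 < b)
    (h : ∀ lam, IsBary Ap β lam → b ≤ ∏ α ∈ Ap, v α ^ lam α) :
    ∃ t : Fin n → ℝ, ∀ α ∈ Ap, b ≤ v α * exp ((α - β) ⬝ᵥ t) := by
  classical
  obtain ⟨φ, hφ⟩ := exists_dual_le_of_forall_sum_mul_nonpos Ap (fun α => α - β)
    (fun α => log b - log (v α)) fun lam hlam0 hlam1 hlamβ => by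
      have hbary : IsBary Ap β lam := ⟨hlam0, hlam1, (sum_smul_sub_eq_zero_iff hlam1 id β).1 hlamβ⟩
      have hlog := log_le_log hb (h lam hbary)
      rw [log_prod fun α hα => (rpow_pos_of_pos (hv α hα) _).ne'] at hlog
      simp only [mul_sub, sum_sub_distrib, ← sum_mul, hlam1, one_mul, sub_nonpos]
      exact hlog.trans_eq (sum_congr rfl fun α hα => log_rpow (hv α hα) _)
  refine ⟨(dotProductEquiv ℝ (Fin n)).symm φ, fun α hα => ?_⟩
  have hφα := hφ α hα
  rw [← (dotProductEquiv ℝ (Fin n)).apply_symm_apply φ, dotProductEquiv_apply_apply,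
    dotProduct_comm] at hφα
  rw [← log_le_log_iff hb (mul_pos (hv α hα) (exp_pos _)), log_mul (hv α hα).ne' (exp_pos _).ne',
    log_exp]
  linarith

theorem exists_le_mul_exp_iff_forall_isBary {Ap : Finset (Fin n → ℝ)} {v : (Fin n → ℝ) → ℝ}
    (hv : ∀ α ∈ Ap, 0 < v α) (β : Fin n → ℝ) {b : ℝ} (hb : 0 ≤ b) :
    (∃ t : Fin n → ℝ, ∀ α ∈ Ap, b ≤ v α * exp ((α - β) ⬝ᵥ t)) ↔
      ∀ lam, IsBary Ap β lam → b ≤ ∏ α ∈ Ap, v α ^ lam α := by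
  refine ⟨fun ⟨t, ht⟩ lam hlam => hlam.le_prod_rpow (fun α hα => (hv α hα).le) hb ht,
    fun h => ?_⟩
  rcases hb.eq_or_lt with rfl | hb
  · exact ⟨0, fun α hα => (mul_pos (hv α hα) (exp_pos _)).le⟩
  · exact exists_le_mul_exp_of_forall_isBary hv hb h

theorem sum_sup'_exp_mul_nonneg {ι : Type*} {K : Finset ι} (hK : K.Nonempty) {s : ι → ℝ}
    (hs : ∀ k ∈ K, 0 ≤ s k) (x : ι → Fin n → ℝ) {A : Finset (Fin n → ℝ)}
    {d : (Fin n → ℝ) → ℝ} (hneg : ∀ γ₁ ∈ A, ∀ γ₂ ∈ A, d γ₁ < 0 → d γ₂ < 0 → γ₁ = γ₂)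
    (hd : ∀ y, 0 ≤ expSum A d y) :
    0 ≤ ∑ γ ∈ A, K.sup' hK (fun k => s k * exp (x k ⬝ᵥ γ)) * d γ := by
  by_cases h : ∃ γ₀ ∈ A, d γ₀ < 0
  · obtain ⟨γ₀, hγ₀, hdγ₀⟩ := h
    obtain ⟨k, hk, hmax⟩ := K.exists_mem_eq_sup' hK fun k => s k * exp (x k ⬝ᵥ γ₀)
    calc 0 ≤ s k * expSum A d (x k) := mul_nonneg (hs k hk) (hd _)
      _ = ∑ γ ∈ A, s k * exp (x k ⬝ᵥ γ) * d γ := by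
        rw [expSum, mul_sum]
        exact sum_congr rfl fun γ _ => by rw [dotProduct]; ring
      _ ≤ _ := sum_le_sum fun γ hγ => ?_
    rcases eq_or_ne γ γ₀ with rfl | hγγ₀
    · rw [hmax]
    · have hdγ : 0 ≤ d γ := not_lt.1 fun hlt => hγγ₀ (hneg γ hγ γ₀ hγ₀ hlt hdγ₀)
      exact mul_le_mul_of_nonneg_right (le_sup' (fun k => s k * exp (x k ⬝ᵥ γ)) hk) hdγ
  · push Not at h
    obtain ⟨k, hk⟩ := hK
    refine sum_nonneg fun γ hγ => mul_nonneg ?_ (h γ hγ)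
    exact (mul_nonneg (hs k hk) (exp_pos _).le).trans (le_sup' (fun k => s k * exp (x k ⬝ᵥ γ)) hk)

theorem mem_dualCone_of_le_mul_exp {Ap An : Finset (Fin n → ℝ)} {v : (Fin n → ℝ) → ℝ}
    (hv : ∀ α ∈ Ap, 0 ≤ v α) {τ : (Fin n → ℝ) → Fin n → ℝ}
    (hτ : ∀ β ∈ An, ∀ α ∈ Ap, |v β| ≤ v α * exp ((α - β) ⬝ᵥ τ β)) :
    v ∈ dualCone (Ap ∪ An) {c | InSAGE Ap An c} := by
  rintro c ⟨hcAp, hcAn, m, d, hcd, hneg, hd⟩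
  rcases An.eq_empty_or_nonempty with rfl | hAn
  · rw [union_empty]
    exact sum_nonneg fun α hα => mul_nonneg (hv α hα) (hcAp α hα)
  have hminorant (β γ : Fin n → ℝ) :
      |v β| * exp (β ⬝ᵥ τ β) * exp (-τ β ⬝ᵥ γ) = |v β| * exp (-((γ - β) ⬝ᵥ τ β)) := by
    rw [mul_assoc, ← exp_add, sub_dotProduct, neg_dotProduct, dotProduct_comm γ]
    ring_nf
  set u : (Fin n → ℝ) → ℝ :=
    fun γ => An.sup' hAn fun β => |v β| * exp (β ⬝ᵥ τ β) * exp (-τ β ⬝ᵥ γ)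
  have hu_le : ∀ α ∈ Ap, u α ≤ v α := fun α hα => sup'_le _ _ fun β hβ => by
    rw [hminorant, exp_neg, ← div_eq_mul_inv, div_le_iff₀ (exp_pos _)]
    exact hτ β hβ α hα
  have hu_ge : ∀ β ∈ An, v β ≤ u β := fun β hβ => by
    refine (le_abs_self _).trans (le_of_eq_of_le ?_ (le_sup' _ hβ))
    rw [hminorant, sub_self, zero_dotProduct, neg_zero, exp_zero, mul_one]
  calc 0 ≤ ∑ i, ∑ γ ∈ Ap ∪ An, u γ * d i γ := sum_nonneg fun i _ =>
        sum_sup'_exp_mul_nonneg hAn (fun β _ => by positivity) _ (hneg i) (hd i)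
    _ = ∑ γ ∈ Ap ∪ An, u γ * c γ := by
        rw [sum_comm]
        exact sum_congr rfl fun γ hγ => by rw [hcd γ hγ, mul_sum]
    _ ≤ ∑ γ ∈ Ap ∪ An, v γ * c γ := sum_le_sum fun γ hγ => by
        rcases mem_union.1 hγ with hα | hβ
        · exact mul_le_mul_of_nonneg_right (hu_le γ hα) (hcAp γ hα)
        · exact mul_le_mul_of_nonpos_right (hu_ge γ hβ) (hcAn γ hβ)

end Signomial

theorem dual_membership_iff_LP_feasible_general {n : ℕ}
    (Ap An : Finset (Fin n → ℝ))
    (v : (Fin n → ℝ) → ℝ) (hv : ∀ α ∈ Ap, 0 < v α) :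
    (InDual Ap An v ↔
      ∃ τ : (Fin n → ℝ) → (Fin n → ℝ), ∀ β ∈ An, ∀ α ∈ Ap,
        |v β| ≤ v α * Real.exp (∑ i, (α i - β i) * τ β i)) ∧
    (InDual Ap An v → v ∈ dualCone (Ap ∪ An) {c | InSAGE Ap An c}) := by
  have hfeasible : InDual Ap An v ↔
      ∃ τ : (Fin n → ℝ) → (Fin n → ℝ), ∀ β ∈ An, ∀ α ∈ Ap, |v β| ≤ v α * exp ((α - β) ⬝ᵥ τ β) := by
    rw [InDual, and_iff_right fun α hα => (hv α hα).le]
    constructor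
    · intro h
      choose! τ hτ using fun β hβ =>
        (exists_le_mul_exp_iff_forall_isBary hv β (abs_nonneg (v β))).2 (h β hβ)
      exact ⟨τ, hτ⟩
    · rintro ⟨τ, hτ⟩ β hβ
      exact (exists_le_mul_exp_iff_forall_isBary hv β (abs_nonneg (v β))).1 ⟨τ β, hτ β hβ⟩
  exact ⟨hfeasible, fun hD =>
    let ⟨_, hτ⟩ := hfeasible.1 hD
    mem_dualCone_of_le_mul_exp (fun α hα => (hv α hα).le) hτ⟩

/-- Membership in `D_{(A⁺,A⁻)}` (for positive coefficients on `A⁺`) is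
equivalent to feasibility of the linear system `ln(|v_β|/v_α) ≤ ⟨α−β, τ^{(β)}⟩`
(stated multiplicatively), and every such `v` lies in the dual cone of `C_{(A⁺,A⁻)}`. -/
theorem dual_membership_iff_LP_feasible {n : ℕ}
    (Ap An : Finset (Fin n → ℝ)) (hdisj : Disjoint Ap An) (hAp : Ap.Nonempty)
    (v : (Fin n → ℝ) → ℝ) (hv : ∀ α ∈ Ap, 0 < v α) :
    (InDual Ap An v ↔
      ∃ τ : (Fin n → ℝ) → (Fin n → ℝ), ∀ β ∈ An, ∀ α ∈ Ap,
        |v β| ≤ v α * Real.exp (∑ i, (α i - β i) * τ β i)) ∧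
    (InDual Ap An v → v ∈ dualCone (Ap ∪ An) {c | InSAGE Ap An c}) :=
  dual_membership_iff_LP_feasible_general Ap An v hv
end

section
/- Let A⁺, A⁻ ⊆ ℝⁿ be disjoint finite sets with 0 ∈ A⁺ and A = A⁺ ∪ A⁻, and let v : A → ℝ satisfy v_α > 0 for all α ∈ A⁺ \ {0}. Let γ ∈ ℝ with v_0 + γ > 0, and let w : A → ℝ agree with v except that w_0 = v_0 + γ. Then w ∈ D_{(A⁺,A⁻)} if and only if there exist vectors (τ^{(β)})_{β∈A⁻} ⊆ ℝⁿ such that for every β ∈ A⁻: ln(|v_β|/v_α) ≤ ⟨α − β, τ^{(β)}⟩ for all α ∈ A⁺ \ {0}, and ln(|v_β|) − ln(v_0 + γ) ≤ ⟨−β, τ^{(β)}⟩; these are exactly the constraints of the linear program LP⁺ with c = ln(v_0 + γ). -/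
/-!
Fix `β ∈ A⁻` and put `c_α = log w_α`. In logarithms, the condition of `D` at `β` says
`log |v_β| ≤ ∑ λ_α c_α` for all barycentric coordinates `λ` of `β`, and `LP⁺` asks for a slope `τ`
with `log |v_β| ≤ c_α + ⟨α - β, τ⟩` for all `α ∈ A⁺`. Averaging the latter with weights `λ` gives
the former. Conversely, a nonnegative combination of the vectors `(α - β, c_α - log |v_β|)` equal
to `(0, -1)` would normalize to barycentric coordinates violating the condition, so Farkas' lemma
gives a functional nonnegative on these vectors and negative on `(0, -1)`; scaled to last
coordinate `1`, it is `(τ, 1)`. Farkas' lemma applies because finitely generated cones are closed: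
by conic Carathéodory such a cone is a finite union of cones on linearly independent generators,
each the image of the closed orthant under an injective linear map.
-/

open Finset

lemma exists_sub_mul_nonneg_and_eq_zero {ι : Type*} {s : Finset ι} {μ c : ι → ℝ}
    (hμ : ∀ i ∈ s, 0 ≤ μ i) (hc : ∃ i ∈ s, 0 < c i) :
    ∃ t : ℝ, (∀ i ∈ s, 0 ≤ μ i - t * c i) ∧ ∃ i ∈ s, μ i - t * c i = 0 := by
  obtain ⟨i₀, hi₀, hmin⟩ := (s.filter (0 < c ·)).exists_min_image (fun i => μ i / c i)
    (by simpa [Finset.Nonempty] using hc)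
  rw [mem_filter] at hi₀
  refine ⟨μ i₀ / c i₀, fun i hi => ?_, i₀, hi₀.1, by field_simp [hi₀.2.ne']; ring⟩
  rcases le_or_gt (c i) 0 with hci | hci
  · nlinarith [hμ i hi, div_nonneg (hμ i₀ hi₀.1) hi₀.2.le]
  · have := hmin i (mem_filter.2 ⟨hi, hci⟩)
    rw [div_le_div_iff₀ hi₀.2 hci] at this
    rw [sub_nonneg, div_mul_eq_mul_div, div_le_iff₀ hi₀.2]
    linarith

namespace PointedCone

variable {E ι : Type*} [AddCommGroup E] [Module ℝ E]

lemma mem_hull_image_finset {s : Finset ι} {f : ι → E} {x : E} :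
    x ∈ hull ℝ (f '' s) ↔ ∃ μ : ι → ℝ, (∀ i ∈ s, 0 ≤ μ i) ∧ ∑ i ∈ s, μ i • f i = x := by
  constructor
  · rw [hull, Finsupp.mem_span_image_iff_linearCombination]
    rintro ⟨l, hl, rfl⟩
    refine ⟨fun i => l i, fun i _ => (l i).2, ?_⟩
    rw [Finsupp.linearCombination_apply, Finsupp.sum_of_support_subset l
      ((Finsupp.mem_supported _ _).1 hl) (fun i a => a • f i) (fun i _ => zero_smul _ _)]
    rfl
  · rintro ⟨μ, hμ, rfl⟩
    exact sum_mem fun i hi => smul_mem _ (hμ i hi) (subset_hull ⟨i, hi, rfl⟩)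

lemma coe_hull_image_eq_biUnion_erase [DecidableEq ι] {s : Finset ι} {f : ι → E}
    (hs : ¬LinearIndepOn ℝ f s) :
    (hull ℝ (f '' s) : Set E) = ⋃ i ∈ s, (hull ℝ (f '' (s.erase i)) : Set E) := by
  refine subset_antisymm (fun x hx => ?_) (Set.iUnion₂_subset fun i _ =>
    Submodule.span_mono (Set.image_mono (by simp)))
  obtain ⟨μ, hμ, rfl⟩ := mem_hull_image_finset.1 hx
  obtain ⟨c, hc0, hc⟩ : ∃ c : ι → ℝ, ∑ i ∈ s, c i • f i = 0 ∧ ∃ i ∈ s, 0 < c i := by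
    obtain ⟨c, hc0, i, hi, hci⟩ := not_linearIndepOn_finset_iff.1 hs
    rcases hci.lt_or_gt with hneg | hpos
    · exact ⟨-c, by simpa using hc0, i, hi, by simpa using hneg⟩
    · exact ⟨c, hc0, i, hi, hpos⟩
  obtain ⟨t, ht, i₀, hi₀, hzero⟩ := exists_sub_mul_nonneg_and_eq_zero hμ hc
  have hsum : ∑ i ∈ s, μ i • f i = ∑ i ∈ s, (μ i - t * c i) • f i := by
    simp only [sub_smul, sum_sub_distrib, mul_smul, ← smul_sum, hc0, smul_zero, sub_zero]
  refine Set.mem_biUnion hi₀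
    (mem_hull_image_finset.2 ⟨_, fun i hi => ht i (mem_of_mem_erase hi), ?_⟩)
  rw [hsum, ← sum_erase_add _ _ hi₀, hzero, zero_smul, add_zero]

variable [TopologicalSpace E] [IsTopologicalAddGroup E] [ContinuousSMul ℝ E] [T2Space E]

lemma isClosed_hull_image_of_linearIndepOn {s : Finset ι} {f : ι → E}
    (hs : LinearIndepOn ℝ f s) : IsClosed (hull ℝ (f '' s) : Set E) := by
  set T := Fintype.linearCombination ℝ (fun i : s => f i)
  have hT : Topology.IsClosedEmbedding T := LinearMap.isClosedEmbedding_of_injective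
    (LinearMap.ker_eq_bot.2 hs.fintypeLinearCombination_injective)
  have : (hull ℝ (f '' s) : Set E) = T '' Set.Ici 0 := by
    ext x
    rw [SetLike.mem_coe, mem_hull_image_finset]
    constructor
    · rintro ⟨μ, hμ, rfl⟩
      exact ⟨fun i => μ i, fun i => hμ i i.2, by
        simpa [T, Fintype.linearCombination_apply] using sum_attach s (fun i => μ i • f i)⟩
    · classical
      rintro ⟨μ, hμ, rfl⟩
      refine ⟨fun i => if h : i ∈ s then μ ⟨i, h⟩ else 0,
        fun i hi => by simpa [hi] using hμ ⟨i, hi⟩, ?_⟩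
      simp [T, Fintype.linearCombination_apply, ← sum_attach s]
  rw [this]
  exact hT.isClosedMap _ isClosed_Ici

theorem isClosed_hull_image_finset (s : Finset ι) (f : ι → E) :
    IsClosed (hull ℝ (f '' s) : Set E) := by
  classical
  induction s using Finset.strongInduction with
  | H s ih =>
    by_cases hs : LinearIndepOn ℝ f s
    · exact isClosed_hull_image_of_linearIndepOn hs
    · rw [coe_hull_image_eq_biUnion_erase hs]
      exact s.finite_toSet.isClosed_biUnion fun i hi => ih _ (erase_ssubset hi)

theorem exists_nonneg_of_notMem_hull_image [LocallyConvexSpace ℝ E] {s : Finset ι} {f : ι → E}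
    {b : E} (hb : b ∉ hull ℝ (f '' s)) :
    ∃ φ : StrongDual ℝ E, (∀ i ∈ s, 0 ≤ φ (f i)) ∧ φ b < 0 := by
  let C : ProperCone ℝ E := ⟨hull ℝ (f '' s), isClosed_hull_image_finset s f⟩
  obtain ⟨φ, hφ, hφb⟩ := C.hyperplane_separation_point (x₀ := b) hb
  exact ⟨φ, fun i hi => hφ _ (subset_hull ⟨i, hi, rfl⟩), hφb⟩

end PointedCone

lemma StrongDual.apply_prod_eq_sum {ι : Type*} [Fintype ι] [DecidableEq ι]
    (φ : StrongDual ℝ ((ι → ℝ) × ℝ)) (x : ι → ℝ) (r : ℝ) :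
    φ (x, r) = ∑ i, x i * φ (Pi.single i 1, 0) + r * φ (0, 1) := by
  have hx : (x, r) = ∑ i, x i • ((Pi.single i 1 : ι → ℝ), (0 : ℝ)) + r • (0, 1) := by
    ext j <;> simp [Prod.fst_sum, Prod.snd_sum, Pi.single_apply]
  rw [hx, map_add, map_sum]
  simp only [map_smul, smul_eq_mul]

section Barycentric

variable {n : ℕ} {Ap : Finset (Fin n → ℝ)} {β : Fin n → ℝ}

lemma IsBary.sum_mul_sub_eq_zero {lam : (Fin n → ℝ) → ℝ} (h : IsBary Ap β lam) (i : Fin n) :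
    ∑ α ∈ Ap, lam α * (α i - β i) = 0 := by
  obtain ⟨-, hsum, hbar⟩ := h
  have := congrFun hbar i
  simp only [Finset.sum_apply, Pi.smul_apply, smul_eq_mul] at this
  simp [mul_sub, sum_sub_distrib, ← sum_mul, hsum, this]

lemma isBary_div_sum {μ : (Fin n → ℝ) → ℝ} (hμ : ∀ α ∈ Ap, 0 ≤ μ α)
    (hpos : 0 < ∑ α ∈ Ap, μ α) (hbar : ∑ α ∈ Ap, μ α • (α - β) = 0) :
    IsBary Ap β (fun α => μ α / ∑ α ∈ Ap, μ α) := by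
  refine ⟨fun α hα => div_nonneg (hμ α hα) hpos.le, by rw [← sum_div, div_self hpos.ne'], ?_⟩
  simp only [smul_sub, sum_sub_distrib, ← sum_smul, sub_eq_zero] at hbar
  simp only [div_eq_inv_mul, mul_smul]
  rw [← smul_sum, hbar, smul_smul, inv_mul_cancel₀ hpos.ne', one_smul]

variable {c : (Fin n → ℝ) → ℝ} {L : ℝ}

lemma le_sum_of_isBary {τ : Fin n → ℝ} (hτ : ∀ α ∈ Ap, L ≤ c α + ∑ i, (α i - β i) * τ i)
    {lam : (Fin n → ℝ) → ℝ} (hlam : IsBary Ap β lam) : L ≤ ∑ α ∈ Ap, lam α * c α :=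
  calc L = ∑ α ∈ Ap, lam α * L := by rw [← sum_mul, hlam.2.1, one_mul]
    _ ≤ ∑ α ∈ Ap, lam α * (c α + ∑ i, (α i - β i) * τ i) :=
      sum_le_sum fun α hα => mul_le_mul_of_nonneg_left (hτ α hα) (hlam.1 α hα)
    _ = ∑ α ∈ Ap, lam α * c α + ∑ i, (∑ α ∈ Ap, lam α * (α i - β i)) * τ i := by
      simp only [mul_add, sum_add_distrib, mul_sum, sum_mul, mul_assoc]
      rw [sum_comm (s := Ap)]
    _ = ∑ α ∈ Ap, lam α * c α := by simp [hlam.sum_mul_sub_eq_zero]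

lemma exists_le_add_of_forall_isBary
    (h : ∀ lam, IsBary Ap β lam → L ≤ ∑ α ∈ Ap, lam α * c α) :
    ∃ τ : Fin n → ℝ, ∀ α ∈ Ap, L ≤ c α + ∑ i, (α i - β i) * τ i := by
  set p : (Fin n → ℝ) → (Fin n → ℝ) × ℝ := fun α => (α - β, c α - L)
  have hb : ((0, -1) : (Fin n → ℝ) × ℝ) ∉ PointedCone.hull ℝ (p '' Ap) := by
    rw [PointedCone.mem_hull_image_finset]
    rintro ⟨μ, hμ, hsum⟩
    have hfst : ∑ α ∈ Ap, μ α • (α - β) = 0 := by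
      simpa [p, Prod.fst_sum] using congrArg Prod.fst hsum
    have hsnd : ∑ α ∈ Ap, μ α * c α - (∑ α ∈ Ap, μ α) * L = -1 := by
      simpa [p, Prod.snd_sum, mul_sub, sum_sub_distrib, sum_mul] using congrArg Prod.snd hsum
    rcases (sum_nonneg hμ).eq_or_lt with hzero | hpos
    · have hμ0 := (sum_eq_zero_iff_of_nonneg hμ).1 hzero.symm
      rw [← hzero, sum_eq_zero fun α hα => by simp [hμ0 α hα]] at hsnd
      norm_num at hsnd
    · have hL := h _ (isBary_div_sum hμ hpos hfst)
      simp only [div_mul_eq_mul_div, ← sum_div, le_div_iff₀ hpos] at hL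
      linarith
  obtain ⟨φ, hφ, hφb⟩ := PointedCone.exists_nonneg_of_notMem_hull_image hb
  have ha : 0 < φ (0, 1) := by
    rw [StrongDual.apply_prod_eq_sum] at hφb
    simpa using hφb
  refine ⟨fun i => φ (Pi.single i 1, 0) / φ (0, 1), fun α hα => ?_⟩
  have hα := hφ α hα
  rw [StrongDual.apply_prod_eq_sum] at hα
  have := div_nonneg hα ha.le
  simp only [add_div, sum_div, mul_div_cancel_right₀ _ ha.ne', Pi.sub_apply,
    mul_div_assoc] at this
  linarith

theorem forall_isBary_le_sum_iff :
    (∀ lam, IsBary Ap β lam → L ≤ ∑ α ∈ Ap, lam α * c α) ↔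
      ∃ τ : Fin n → ℝ, ∀ α ∈ Ap, L ≤ c α + ∑ i, (α i - β i) * τ i :=
  ⟨exists_le_add_of_forall_isBary, fun ⟨_, hτ⟩ _ => le_sum_of_isBary hτ⟩

open Real in
theorem forall_isBary_le_prod_rpow_iff {w : (Fin n → ℝ) → ℝ} (hw : ∀ α ∈ Ap, 0 < w α) {b : ℝ}
    (hb : 0 ≤ b) :
    (∀ lam, IsBary Ap β lam → b ≤ ∏ α ∈ Ap, w α ^ lam α) ↔
      ∃ τ : Fin n → ℝ, ∀ α ∈ Ap, b ≤ w α * exp (∑ i, (α i - β i) * τ i) := by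
  have hprod_pos (lam : (Fin n → ℝ) → ℝ) : 0 < ∏ α ∈ Ap, w α ^ lam α :=
    prod_pos fun α hα => rpow_pos_of_pos (hw α hα) _
  rcases hb.eq_or_lt with rfl | hb
  · exact iff_of_true (fun lam _ => (hprod_pos lam).le)
      ⟨0, fun α hα => (mul_pos (hw α hα) (exp_pos _)).le⟩
  have hprod (lam : (Fin n → ℝ) → ℝ) :
      b ≤ ∏ α ∈ Ap, w α ^ lam α ↔ log b ≤ ∑ α ∈ Ap, lam α * log (w α) := by
    rw [← log_le_log_iff hb (hprod_pos lam),
      log_prod fun α hα => (rpow_pos_of_pos (hw α hα) _).ne',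
      sum_congr rfl fun α hα => log_rpow (hw α hα) _]
  have hexp {α} (hα : α ∈ Ap) (s : ℝ) : b ≤ w α * exp s ↔ log b ≤ log (w α) + s := by
    rw [← log_le_log_iff hb (mul_pos (hw α hα) (exp_pos s)),
      log_mul (hw α hα).ne' (exp_pos s).ne', log_exp]
  simp only [hprod, forall_isBary_le_sum_iff]
  exact exists_congr fun τ => forall₂_congr fun α hα => (hexp hα _).symm

end Barycentric

/-- Shifting the constant coefficient by `γ`, membership of the shifted vector
`w` in `D_{(A⁺,A⁻)}` is equivalent to feasibility of the constraints of the linear program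
`LP⁺` with `c = ln(v₀ + γ)` (the inequalities `ln(|v_β|/v_α) ≤ ⟨α−β, τ^{(β)}⟩` for
`α ∈ A⁺ \ {0}` and `ln(|v_β|) − c ≤ ⟨−β, τ^{(β)}⟩`, stated multiplicatively). -/
theorem shifted_dual_membership_iff_LPplus {n : ℕ}
    (Ap An : Finset (Fin n → ℝ)) (hdisj : Disjoint Ap An) (h0 : (0 : Fin n → ℝ) ∈ Ap)
    (v : (Fin n → ℝ) → ℝ) (hv : ∀ α ∈ Ap, α ≠ 0 → 0 < v α)
    (γ : ℝ) (hγ : 0 < v 0 + γ)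
    (w : (Fin n → ℝ) → ℝ) (hw : ∀ δ : Fin n → ℝ, δ ≠ 0 → w δ = v δ) (hw0 : w 0 = v 0 + γ) :
    InDual Ap An w ↔
      ∃ τ : (Fin n → ℝ) → (Fin n → ℝ), ∀ β ∈ An,
        (∀ α ∈ Ap, α ≠ 0 → |v β| ≤ v α * Real.exp (∑ i, (α i - β i) * τ β i)) ∧
        |v β| ≤ (v 0 + γ) * Real.exp (∑ i, (0 - β i) * τ β i) := by
  have hw_pos : ∀ α ∈ Ap, 0 < w α := fun α hα => by
    rcases eq_or_ne α 0 with rfl | hα0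
    · exact hw0 ▸ hγ
    · exact hw α hα0 ▸ hv α hα hα0
  have hwv : ∀ β ∈ An, w β = v β := fun β hβ =>
    hw β fun hβ0 => disjoint_right.1 hdisj hβ (hβ0 ▸ h0)
  have hsplit (β : Fin n → ℝ) (τ : Fin n → ℝ) :
      (∀ α ∈ Ap, |v β| ≤ w α * Real.exp (∑ i, (α i - β i) * τ i)) ↔
        (∀ α ∈ Ap, α ≠ 0 → |v β| ≤ v α * Real.exp (∑ i, (α i - β i) * τ i)) ∧
          |v β| ≤ (v 0 + γ) * Real.exp (∑ i, (0 - β i) * τ i) := by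
    constructor
    · intro h
      exact ⟨fun α hα hα0 => hw α hα0 ▸ h α hα, by simpa [hw0] using h 0 h0⟩
    · rintro ⟨hne, hzero⟩ α hα
      rcases eq_or_ne α 0 with rfl | hα0
      · simpa [hw0] using hzero
      · exact hw α hα0 ▸ hne α hα hα0
  rw [InDual, and_iff_right fun α hα => (hw_pos α hα).le]
  constructor
  · intro h
    choose! τ hτ using fun β hβ =>
      (forall_isBary_le_prod_rpow_iff hw_pos (abs_nonneg (v β))).1 (hwv β hβ ▸ h β hβ)
    exact ⟨τ, fun β hβ => (hsplit β (τ β)).1 (hτ β hβ)⟩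
  · rintro ⟨τ, hτ⟩ β hβ
    rw [hwv β hβ]
    exact (forall_isBary_le_prod_rpow_iff hw_pos (abs_nonneg (v β))).2
      ⟨τ β, (hsplit β (τ β)).2 (hτ β hβ)⟩
end
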